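/- arXiv:2602.18938 — 2 statements merged into one kernel-verified Lean document; each statement's English description precedes it below -/
import Mathlib

section
/- Let ε > 1, ς > 0, α > 0, and τ^FE = ε·(1+ς)·(1+α)/(ς·(ε + α·(ε-1))). Then τ^FE lies strictly between the welfare-optimal tariff factor τ*_W = 1 + 1/ς and the Laffer-peak tariff factor τ*_L = 1 + (ς + ε)/(ς·(ε - 1)). -/
/-!
Writing `D = ε + α (ε - 1)`, the fiscally efficient factor is `τ*_W · ε (1 + α) / D`, and, since
`τ*_L = ε (1 + ς) / (ς (ε - 1))`, also `τ*_L · (D - 1) / D`. The first multiplier exceeds `1` because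
`D = ε (1 + α) - α`, the second is below `1` because `D > 0`.
-/

noncomputable section

namespace Tariff

variable {ε ς α : ℝ}

def welfareOptimal (ς : ℝ) : ℝ := 1 + 1 / ς

def lafferPeak (ε ς : ℝ) : ℝ := 1 + (ς + ε) / (ς * (ε - 1))

def fiscallyEfficient (ε ς α : ℝ) : ℝ := ε * (1 + ς) * (1 + α) / (ς * (ε + α * (ε - 1)))

lemma denom_pos (hε : 1 < ε) (hα : 0 ≤ α) : 0 < ε + α * (ε - 1) := by
  nlinarith [mul_nonneg hα (sub_nonneg.mpr hε.le)]

lemma welfareOptimal_pos (hς : 0 < ς) : 0 < welfareOptimal ς := by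
  unfold welfareOptimal; positivity

lemma lafferPeak_eq (hς : ς ≠ 0) (hε : ε ≠ 1) :
    lafferPeak ε ς = ε * (1 + ς) / (ς * (ε - 1)) := by
  have : ε - 1 ≠ 0 := sub_ne_zero.mpr hε
  unfold lafferPeak
  field_simp
  ring

lemma lafferPeak_pos (hε : 1 < ε) (hς : 0 < ς) : 0 < lafferPeak ε ς := by
  rw [lafferPeak_eq hς.ne' hε.ne']
  have : 0 < ε - 1 := sub_pos.mpr hε
  positivity

lemma fiscallyEfficient_eq_welfareOptimal_mul (hς : ς ≠ 0) (hD : ε + α * (ε - 1) ≠ 0) :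
    fiscallyEfficient ε ς α = welfareOptimal ς * (ε * (1 + α) / (ε + α * (ε - 1))) := by
  unfold fiscallyEfficient welfareOptimal
  field_simp
  ring

lemma fiscallyEfficient_eq_lafferPeak_mul (hς : ς ≠ 0) (hε : ε ≠ 1)
    (hD : ε + α * (ε - 1) ≠ 0) :
    fiscallyEfficient ε ς α =
      lafferPeak ε ς * ((ε - 1) * (1 + α) / (ε + α * (ε - 1))) := by
  have : ε - 1 ≠ 0 := sub_ne_zero.mpr hε
  rw [lafferPeak_eq hς hε]
  unfold fiscallyEfficient
  field_simp

theorem welfareOptimal_lt_fiscallyEfficient (hε : 1 < ε) (hς : 0 < ς) (hα : 0 < α) :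
    welfareOptimal ς < fiscallyEfficient ε ς α := by
  have hD := denom_pos hε hα.le
  rw [fiscallyEfficient_eq_welfareOptimal_mul hς.ne' hD.ne']
  refine lt_mul_of_one_lt_right (welfareOptimal_pos hς) ?_
  rw [one_lt_div hD]
  linarith

theorem fiscallyEfficient_lt_lafferPeak (hε : 1 < ε) (hς : 0 < ς) (hα : 0 ≤ α) :
    fiscallyEfficient ε ς α < lafferPeak ε ς := by
  have hD := denom_pos hε hα
  rw [fiscallyEfficient_eq_lafferPeak_mul hς.ne' hε.ne' hD.ne']
  refine mul_lt_of_lt_one_right (lafferPeak_pos hε hς) ?_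
  rw [div_lt_one hD]
  linarith

end Tariff

end

theorem fiscally_optimal_tariff_between (ε ς α : ℝ) (hε : 1 < ε) (hς : 0 < ς) (hα : 0 < α) :
    1 + 1 / ς < ε * (1 + ς) * (1 + α) / (ς * (ε + α * (ε - 1))) ∧
    ε * (1 + ς) * (1 + α) / (ς * (ε + α * (ε - 1))) < 1 + (ς + ε) / (ς * (ε - 1)) :=
  ⟨Tariff.welfareOptimal_lt_fiscallyEfficient hε hς hα,
    Tariff.fiscallyEfficient_lt_lafferPeak hε hς hα.le⟩
end

section
/- Let ε > 1, ς > 0, and let MEB(τ) = ε·((τ-1)·ς - 1)/D(τ) with D(τ) = ε + τ·ς - (τ-1)·ε·ς. On the open interval between τ*_W = 1 + 1/ς and τ*_L = 1 + (ς+ε)/(ς·(ε-1)), D(τ) > 0 and MEB(τ) > 0; moreover MEB(τ*_W) = 0 and MEB(τ) → +∞ as τ → τ*_L from the left. -/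
/-
Both numerator and denominator of MEB are affine in τ, and factor as
`ε * ((τ - 1) * ς - 1) = ε * ς * (τ - τ*_W)` and `D(τ) = ς * (ε - 1) * (τ*_L - τ)`.
Hence MEB is a positive multiple of `(τ - τ*_W) / (τ*_L - τ)`, and everything follows from
`τ*_W < τ*_L`.
-/

open Filter Topology

theorem tendsto_div_sub_nhdsLT_atTop {f : ℝ → ℝ} {b : ℝ} (hf : ContinuousAt f b)
    (hfb : 0 < f b) : Tendsto (fun x => f x / (b - x)) (𝓝[<] b) atTop := by
  have hsub : Tendsto (fun x => b - x) (𝓝[<] b) (𝓝[>] 0) := by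
    refine tendsto_nhdsWithin_of_tendsto_nhds_of_eventually_within _ ?_ ?_
    · simpa using ((continuous_sub_left b).tendsto b).mono_left nhdsWithin_le_nhds
    · filter_upwards [self_mem_nhdsWithin] with x hx
      exact sub_pos.2 (Set.mem_Iio.1 hx)
  simpa only [div_eq_mul_inv, Function.comp_def] using
    (hf.tendsto.mono_left nhdsWithin_le_nhds).pos_mul_atTop hfb
      (tendsto_inv_nhdsGT_zero.comp hsub)

section Tariff

variable {ε ς : ℝ}

theorem tariff_numerator_eq (hς : ς ≠ 0) (τ : ℝ) :
    (τ - 1) * ς - 1 = ς * (τ - (1 + 1 / ς)) := by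
  field_simp
  ring

theorem tariff_denominator_eq (hς : ς ≠ 0) (hε : ε ≠ 1) (τ : ℝ) :
    ε + τ * ς - (τ - 1) * ε * ς = ς * (ε - 1) * (1 + (ς + ε) / (ς * (ε - 1)) - τ) := by
  have : ε - 1 ≠ 0 := sub_ne_zero.2 hε
  field_simp
  ring

theorem welfare_tariff_lt_laffer_tariff (hε : 1 < ε) (hς : 0 < ς) :
    1 + 1 / ς < 1 + (ς + ε) / (ς * (ε - 1)) := by
  have hε₁ : 0 < ε - 1 := sub_pos.2 hε
  rw [add_lt_add_iff_left, div_lt_div_iff₀ hς (by positivity)]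
  nlinarith

end Tariff

theorem meb_on_tradeoff_interval (ε ς : ℝ) (hε : 1 < ε) (hς : 0 < ς) :
    (∀ τ ∈ Set.Ioo (1 + 1 / ς) (1 + (ς + ε) / (ς * (ε - 1))),
      0 < ε + τ * ς - (τ - 1) * ε * ς ∧
      0 < ε * ((τ - 1) * ς - 1) / (ε + τ * ς - (τ - 1) * ε * ς)) ∧
    ε * (((1 + 1 / ς) - 1) * ς - 1) /
      (ε + (1 + 1 / ς) * ς - ((1 + 1 / ς) - 1) * ε * ς) = 0 ∧
    Filter.Tendsto (fun τ : ℝ => ε * ((τ - 1) * ς - 1) / (ε + τ * ς - (τ - 1) * ε * ς))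
      (nhdsWithin (1 + (ς + ε) / (ς * (ε - 1))) (Set.Iio (1 + (ς + ε) / (ς * (ε - 1)))))
      Filter.atTop := by
  have hε₀ : 0 < ε := zero_lt_one.trans hε
  have hε₁ : 0 < ε - 1 := sub_pos.2 hε
  simp_rw [tariff_denominator_eq hς.ne' hε.ne', tariff_numerator_eq hς.ne']
  refine ⟨fun τ ⟨hW, hL⟩ => ?_, by simp, ?_⟩
  · have := sub_pos.2 hW
    have := sub_pos.2 hL
    constructor <;> positivity
  · simp_rw [div_mul_eq_div_div _ (ς * (ε - 1))]
    refine tendsto_div_sub_nhdsLT_atTop (by fun_prop) ?_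
    have := sub_pos.2 (welfare_tariff_lt_laffer_tariff hε hς)
    positivity
end
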